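/- In the multi-target detection model with an arbitrary spacing distribution (non-overlap condition s_k − s_{k−1} ≥ L), for all 0 ≤ l₁ ≤ l₂ ≤ L−1 the deterministic identity a³_{s∗x}[l₁, l₂] = ρ₀ a_x³[l₁, l₂] + ((M−1)L/N) ( Σ_{j=L}^{L+l₂−l₁−1} ξ[j] a_x³[j−l₂, j+l₁−l₂] + Σ_{j=L}^{L+l₁−1} ξ[j] a_x³[l₂−l₁, j−l₁] ) holds, where ξ is the pair separation function of s. -/

import Mathlib

/-- The sequence `z` of length `m`, zero-padded to all of `ℤ`. -/
noncomputable def zpad (m : ℕ) (z : ℕ → ℝ) : ℤ → ℝ :=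
  fun i => if 0 ≤ i ∧ i < (m : ℤ) then z i.toNat else 0

/-- Third-order autocorrelation of the length-`m` sequence `z` with integer shifts `l₁, l₂`:
`a_z³[l₁,l₂] = (1/m) Σ_{i=0}^{m−1} z[i] z[i+l₁] z[i+l₂]`, with `z` extended by zero. -/
noncomputable def acorr3 (m : ℕ) (z : ℕ → ℝ) (l₁ l₂ : ℤ) : ℝ :=
  (1 / (m : ℝ)) * ∑ i ∈ Finset.range m, zpad m z i * zpad m z (i + l₁) * zpad m z (i + l₂)

/-- The (zero-padded) linear convolution `s∗x` of the binary sequence `s` with the signal `x`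
of length `L`, where `s` has `M` nonzero entries at the positions `p 0 < p 1 < ⋯ < p (M−1)`:
`(s∗x)[i] = Σ_k x[i − p k]`, with `x` extended by zero. -/
noncomputable def sconv (L M : ℕ) (x : ℕ → ℝ) (p : Fin M → ℕ) : ℤ → ℝ :=
  fun i => ∑ k : Fin M, zpad L x (i - (p k : ℤ))

/-- The pair separation function `ξ[j]` of the binary sequence with `M` nonzero entries at the
positions `p 0 < p 1 < ⋯ < p (M−1)`:
`ξ[j] = (1/(M−1)) · #{k ∈ {1,…,M−1} : p k − p (k−1) = j}`. -/
noncomputable def pairSep (M : ℕ) (p : Fin M → ℕ) (j : ℕ) : ℝ :=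
  (Finset.univ.filter (fun k : Fin (M - 1) =>
      p ⟨(k : ℕ) + 1, by have := k.isLt; omega⟩ = p ⟨(k : ℕ), by have := k.isLt; omega⟩ + j)).card
    / ((M : ℝ) - 1)

/-!
Expanding the first factor of `(s∗x)[i] (s∗x)[i+l₁] (s∗x)[i+l₂]` over the copies of `x`: on the
window of copy `k`, the shifted signal only sees copies `k` and `k+1`, because consecutive copies
are at least `L` apart. Of the four resulting products, the one pairing copy `k+1` at shift `l₁`
with copy `k` at shift `l₂ ≥ l₁` vanishes; each of the other three sums to `L` times an
autocorrelation of `x`, read off by centring at a copy whose window lies inside `[0, N)`.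
Grouping the copies by the gap `p (k+1) - p k` turns the sums over `k` into sums against `ξ`.
-/

open scoped Finset

def gap {M : ℕ} (p : Fin (M + 1) → ℕ) (k : Fin M) : ℕ := p k.succ - p k.castSucc

lemma zpad_eq_zero {m : ℕ} {z : ℕ → ℝ} {i : ℤ} (h : i < 0 ∨ (m : ℤ) ≤ i) : zpad m z i = 0 := by
  rw [zpad, if_neg (by omega)]

lemma mem_window_of_zpad_ne_zero {m : ℕ} {z : ℕ → ℝ} {i : ℤ} (h : zpad m z i ≠ 0) :
    0 ≤ i ∧ i < m := by
  by_contra hi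
  exact h (zpad_eq_zero (by omega))

lemma acorr3_eq_zero_of_le {L : ℕ} (x : ℕ → ℝ) (a : ℤ) {b : ℤ} (hb : (L : ℤ) ≤ b) :
    acorr3 L x a b = 0 := by
  rw [acorr3, Finset.sum_eq_zero fun i _ => by rw [zpad_eq_zero (i := i + b) (by omega), mul_zero],
    mul_zero]

lemma sum_range_zpad_mul_zpad_mul_zpad {L N : ℕ} (x : ℕ → ℝ) {c₀ : ℤ} (hc₀ : 0 ≤ c₀)
    (hc₀N : c₀ + L ≤ N) (c₁ c₂ : ℤ) :
    ∑ i ∈ Finset.range N, zpad L x (i - c₀) * zpad L x (i - c₁) * zpad L x (i - c₂)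
      = L * acorr3 L x (c₀ - c₁) (c₀ - c₂) := by
  lift c₀ to ℕ using hc₀
  have hwindow :
      ∑ i ∈ Finset.range N, zpad L x (i - c₀) * zpad L x (i - c₁) * zpad L x (i - c₂)
        = ∑ i ∈ Finset.Ico c₀ (c₀ + L),
            zpad L x (i - c₀) * zpad L x (i - c₁) * zpad L x (i - c₂) := by
    refine (Finset.sum_subset (fun i hi => ?_) fun i _ hi => ?_).symm
    · simp only [Finset.mem_Ico, Finset.mem_range] at hi ⊢; omega
    · simp only [Finset.mem_Ico, not_and_or, not_le, not_lt] at hi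
      rw [zpad_eq_zero (by omega), zero_mul, zero_mul]
  rw [hwindow, Finset.sum_Ico_eq_sum_range, add_tsub_cancel_left, acorr3, ← mul_assoc]
  rcases L.eq_zero_or_pos with rfl | hL
  · simp
  rw [mul_one_div_cancel (by positivity), one_mul]
  refine Finset.sum_congr rfl fun i _ => ?_
  push_cast
  ring_nf

lemma sum_range_zpad_mul_zpad_mul_zpad_of_second {L N : ℕ} (x : ℕ → ℝ) {c₁ : ℤ} (hc₁ : 0 ≤ c₁)
    (hc₁N : c₁ + L ≤ N) (c₀ c₂ : ℤ) :
    ∑ i ∈ Finset.range N, zpad L x (i - c₀) * zpad L x (i - c₁) * zpad L x (i - c₂)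
      = L * acorr3 L x (c₁ - c₂) (c₁ - c₀) := by
  rw [← sum_range_zpad_mul_zpad_mul_zpad x hc₁ hc₁N]
  exact Finset.sum_congr rfl fun _ _ => by ring

lemma sum_range_zpad_mul_zpad_mul_zpad_of_third {L N : ℕ} (x : ℕ → ℝ) {c₂ : ℤ} (hc₂ : 0 ≤ c₂)
    (hc₂N : c₂ + L ≤ N) (c₀ c₁ : ℤ) :
    ∑ i ∈ Finset.range N, zpad L x (i - c₀) * zpad L x (i - c₁) * zpad L x (i - c₂)
      = L * acorr3 L x (c₂ - c₀) (c₂ - c₁) := by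
  rw [← sum_range_zpad_mul_zpad_mul_zpad x hc₂ hc₂N]
  exact Finset.sum_congr rfl fun _ _ => by ring

lemma add_le_of_lt_of_forall_succ {L n : ℕ} {p : Fin (n + 1) → ℕ}
    (h : ∀ k : Fin n, p k.castSucc + L ≤ p k.succ) {a b : Fin (n + 1)} (hab : a < b) :
    p a + L ≤ p b := by
  have hmono : Monotone p := Fin.monotone_iff_le_succ.2 fun k => (Nat.le_add_right _ _).trans (h k)
  obtain ⟨k, rfl⟩ : ∃ k : Fin n, k.castSucc = a :=
    ⟨a.castPred (Fin.ne_last_of_lt hab), Fin.castSucc_castPred _ _⟩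
  exact (h k).trans (hmono (Fin.castSucc_lt_iff_succ_le.1 hab))

section Copies

variable {L M N : ℕ} {x : ℕ → ℝ} {p : Fin (M + 1) → ℕ}

lemma sconv_eq_zpad_add_zpad (hp : ∀ a b, a < b → p a + L ≤ p b) {k : Fin M} {j : ℤ}
    (hj₀ : p k.castSucc ≤ j) (hj₁ : j < p k.succ + L) :
    sconv L (M + 1) x p j = zpad L x (j - p k.castSucc) + zpad L x (j - p k.succ) := by
  refine Fintype.sum_eq_add _ _ (Fin.castSucc_lt_succ (i := k)).ne
    fun k' ⟨h₁, h₂⟩ => zpad_eq_zero ?_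
  rcases lt_or_gt_of_ne h₁ with h | h
  · have := hp _ _ h
    omega
  · have := hp _ _ (lt_of_le_of_ne (Fin.castSucc_lt_iff_succ_le.1 h) (Ne.symm h₂))
    omega

lemma sconv_eq_zpad_last (hp : ∀ a b, a < b → p a + L ≤ p b) {j : ℤ} (hj : p (Fin.last M) ≤ j) :
    sconv L (M + 1) x p j = zpad L x (j - p (Fin.last M)) :=
  Fintype.sum_eq_single _ fun k hk =>
    zpad_eq_zero (by have := hp _ _ (Fin.lt_last_iff_ne_last.2 hk); omega)

lemma zpad_mul_sconv_mul_sconv_castSucc (hp : ∀ a b, a < b → p a + L ≤ p b) {l₁ l₂ : ℕ}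
    (hl₁₂ : l₁ ≤ l₂) (hl₂ : l₂ < L) (k : Fin M) (i : ℤ) :
    zpad L x (i - p k.castSucc) * sconv L (M + 1) x p (i + l₁) * sconv L (M + 1) x p (i + l₂)
      = zpad L x (i - p k.castSucc) * zpad L x (i + l₁ - p k.castSucc)
          * zpad L x (i + l₂ - p k.castSucc)
        + zpad L x (i - p k.castSucc) * zpad L x (i + l₁ - p k.castSucc)
          * zpad L x (i + l₂ - p k.succ)
        + zpad L x (i - p k.castSucc) * zpad L x (i + l₁ - p k.succ)
          * zpad L x (i + l₂ - p k.succ) := by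
  by_cases h₀ : zpad L x (i - p k.castSucc) = 0
  · simp [h₀]
  obtain ⟨hi₀, hi₁⟩ := mem_window_of_zpad_ne_zero h₀
  have hgap := hp k.castSucc k.succ Fin.castSucc_lt_succ
  rw [sconv_eq_zpad_add_zpad hp (k := k) (by omega) (by omega),
    sconv_eq_zpad_add_zpad hp (k := k) (by omega) (by omega)]
  -- the copy `k + 1` at shift `l₁` and the copy `k` at shift `l₂ ≥ l₁` have disjoint windows
  have hcross : zpad L x (i + l₁ - p k.succ) * zpad L x (i + l₂ - p k.castSucc) = 0 := by
    by_cases h : zpad L x (i + l₁ - p k.succ) = 0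
    · rw [h, zero_mul]
    have := mem_window_of_zpad_ne_zero h
    rw [zpad_eq_zero (i := i + l₂ - p k.castSucc) (by omega), mul_zero]
  linear_combination zpad L x (i - p k.castSucc) * hcross

lemma zpad_mul_sconv_mul_sconv_last (hp : ∀ a b, a < b → p a + L ≤ p b) (l₁ l₂ : ℕ) (i : ℤ) :
    zpad L x (i - p (Fin.last M)) * sconv L (M + 1) x p (i + l₁) * sconv L (M + 1) x p (i + l₂)
      = zpad L x (i - p (Fin.last M)) * zpad L x (i + l₁ - p (Fin.last M))
          * zpad L x (i + l₂ - p (Fin.last M)) := by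
  by_cases h₀ : zpad L x (i - p (Fin.last M)) = 0
  · simp [h₀]
  have := (mem_window_of_zpad_ne_zero h₀).1
  rw [sconv_eq_zpad_last hp (by omega), sconv_eq_zpad_last hp (by omega)]

lemma sum_zpad_mul_sconv_mul_sconv_castSucc (hp : ∀ a b, a < b → p a + L ≤ p b)
    (hin : ∀ k, p k + L ≤ N) {l₁ l₂ : ℕ} (hl₁₂ : l₁ ≤ l₂) (hl₂ : l₂ < L) (k : Fin M) :
    ∑ i ∈ Finset.range N,
        zpad L x (i - p k.castSucc) * sconv L (M + 1) x p (i + l₁) * sconv L (M + 1) x p (i + l₂)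
      = L * acorr3 L x l₁ l₂
        + L * acorr3 L x ((gap p k : ℤ) - l₂) ((gap p k : ℤ) + l₁ - l₂)
        + L * acorr3 L x ((l₂ : ℤ) - l₁) ((gap p k : ℤ) - l₁) := by
  have hgap := hp k.castSucc k.succ Fin.castSucc_lt_succ
  have hink := hin k.succ
  simp only [zpad_mul_sconv_mul_sconv_castSucc hp hl₁₂ hl₂, Finset.sum_add_distrib, gap,
    Nat.cast_sub (hgap.trans' (Nat.le_add_right _ _)), ← sub_sub_eq_add_sub]
  rw [sum_range_zpad_mul_zpad_mul_zpad x (c₀ := p k.castSucc) (by positivity) (by omega),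
    sum_range_zpad_mul_zpad_mul_zpad_of_third x (c₂ := p k.succ - l₂) (by omega) (by omega),
    sum_range_zpad_mul_zpad_mul_zpad_of_second x (c₁ := p k.succ - l₁) (by omega) (by omega)]
  ring_nf

lemma sum_zpad_mul_sconv_mul_sconv_last (hp : ∀ a b, a < b → p a + L ≤ p b)
    (hin : ∀ k, p k + L ≤ N) (l₁ l₂ : ℕ) :
    ∑ i ∈ Finset.range N, zpad L x (i - p (Fin.last M)) * sconv L (M + 1) x p (i + l₁)
        * sconv L (M + 1) x p (i + l₂)
      = L * acorr3 L x l₁ l₂ := by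
  simp only [zpad_mul_sconv_mul_sconv_last hp, ← sub_sub_eq_add_sub]
  rw [sum_range_zpad_mul_zpad_mul_zpad x (by positivity) (by have := hin (Fin.last M); omega)]
  ring_nf

lemma sum_range_sconv_mul_sconv_mul_sconv (hp : ∀ a b, a < b → p a + L ≤ p b)
    (hin : ∀ k, p k + L ≤ N) {l₁ l₂ : ℕ} (hl₁₂ : l₁ ≤ l₂) (hl₂ : l₂ < L) :
    ∑ i ∈ Finset.range N,
        sconv L (M + 1) x p i * sconv L (M + 1) x p (i + l₁) * sconv L (M + 1) x p (i + l₂)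
      = (M + 1) * L * acorr3 L x l₁ l₂
        + L * ∑ k : Fin M, (acorr3 L x ((gap p k : ℤ) - l₂) ((gap p k : ℤ) + l₁ - l₂)
          + acorr3 L x ((l₂ : ℤ) - l₁) ((gap p k : ℤ) - l₁)) := by
  have hexpand : ∀ i : ℕ,
      sconv L (M + 1) x p i * sconv L (M + 1) x p (i + l₁) * sconv L (M + 1) x p (i + l₂)
        = ∑ k, zpad L x (i - p k) * sconv L (M + 1) x p (i + l₁) * sconv L (M + 1) x p (i + l₂) :=
    fun i => by simp only [mul_assoc]; exact Finset.sum_mul _ _ _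
  simp only [hexpand]
  rw [Finset.sum_comm, Fin.sum_univ_castSucc]
  simp only [sum_zpad_mul_sconv_mul_sconv_castSucc hp hin hl₁₂ hl₂,
    sum_zpad_mul_sconv_mul_sconv_last hp hin, Finset.sum_add_distrib, Finset.sum_const,
    Finset.card_univ, Fintype.card_fin, nsmul_eq_mul, mul_add, Finset.mul_sum]
  ring

end Copies

lemma sum_comp_eq_sum_Ico_card_filter_mul {ι : Type*} [Fintype ι] (d : ι → ℕ) (g : ℕ → ℝ)
    {a b : ℕ} (hd : ∀ k, a ≤ d k) (hg : ∀ j, b ≤ j → g j = 0) :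
    ∑ k, g (d k) = ∑ j ∈ Finset.Ico a b, #{k | d k = j} * g j := by
  classical
  calc ∑ k, g (d k) = ∑ k, ∑ j ∈ Finset.Ico a b, if d k = j then g j else 0 := by
        refine Finset.sum_congr rfl fun k _ => ?_
        rw [Finset.sum_ite_eq]
        split_ifs with h
        · rfl
        · exact hg _ (by simp only [Finset.mem_Ico, not_and, not_lt] at h; exact h (hd k))
    _ = ∑ j ∈ Finset.Ico a b, #{k | d k = j} * g j := by
        rw [Finset.sum_comm]
        simp only [Finset.sum_ite, Finset.sum_const_zero, add_zero, Finset.sum_const, nsmul_eq_mul]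

lemma natCast_mul_pairSep_succ {M : ℕ} {p : Fin (M + 1) → ℕ}
    (hp : ∀ k : Fin M, p k.castSucc ≤ p k.succ) (j : ℕ) :
    M * pairSep (M + 1) p j = #{k | gap p k = j} := by
  rcases M.eq_zero_or_pos with rfl | hM
  · simp
  rw [pairSep, Nat.cast_add, Nat.cast_one, add_sub_cancel_right, mul_div_cancel₀ _ (by positivity)]
  congr 2
  ext k
  have := hp k
  rw [Finset.mem_filter, Finset.mem_filter]
  simp only [Finset.mem_univ, true_and, gap]
  change p k.succ = p k.castSucc + j ↔ _
  omega

lemma sum_gap_eq_mul_sum_pairSep {L M u : ℕ} {p : Fin (M + 1) → ℕ}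
    (hsep : ∀ k : Fin M, p k.castSucc + L ≤ p k.succ) (g : ℕ → ℝ) (hg : ∀ j, u ≤ j → g j = 0) :
    ∑ k, g (gap p k) = M * ∑ j ∈ Finset.Ico L u, pairSep (M + 1) p j * g j := by
  have hgap (k : Fin M) : L ≤ gap p k := by
    have := hsep k
    unfold gap
    omega
  rw [sum_comp_eq_sum_Ico_card_filter_mul (gap p) g hgap hg, Finset.mul_sum]
  refine Finset.sum_congr rfl fun j _ => ?_
  rw [← mul_assoc, natCast_mul_pairSep_succ fun k => (Nat.le_add_right _ _).trans (hsep k)]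

/-- Multi-target detection with an arbitrary spacing distribution (non-overlap condition:
consecutive occurrences separated by at least `L`): for all `0 ≤ l₁ ≤ l₂ ≤ L−1`,
`a³_{s∗x}[l₁,l₂] = ρ₀ a_x³[l₁,l₂] + ((M−1)L/N) ( Σ_{j=L}^{L+l₂−l₁−1} ξ[j] a_x³[j−l₂, j+l₁−l₂]
+ Σ_{j=L}^{L+l₁−1} ξ[j] a_x³[l₂−l₁, j−l₁] )`, where `ρ₀ = ML/N` and `ξ` is the pair
separation function of `s`. -/
theorem mtd_third_order_arbitrary_spacing
    (L N M : ℕ)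
    (x : ℕ → ℝ) (p : Fin M → ℕ)
    (hsep : ∀ k : ℕ, ∀ hk : k + 1 < M, p ⟨k, by omega⟩ + L ≤ p ⟨k + 1, hk⟩)
    (hin : ∀ k : Fin M, p k + L ≤ N)
    (l₁ l₂ : ℕ) (hl₁₂ : l₁ ≤ l₂) (hl₂ : l₂ < L) :
    (1 / (N : ℝ)) *
        ∑ i ∈ Finset.range N, sconv L M x p i * sconv L M x p (i + l₁) * sconv L M x p (i + l₂)
      = ((M : ℝ) * L / N) * acorr3 L x l₁ l₂
        + (((M : ℝ) - 1) * L / N) *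
            ((∑ j ∈ Finset.Ico L (L + (l₂ - l₁)),
                pairSep M p j * acorr3 L x ((j : ℤ) - l₂) ((j : ℤ) + l₁ - l₂))
              + ∑ j ∈ Finset.Ico L (L + l₁),
                  pairSep M p j * acorr3 L x ((l₂ : ℤ) - l₁) ((j : ℤ) - l₁)) := by
  rcases M with _ | M
  · simp [sconv, pairSep]
  have hsep' : ∀ k : Fin M, p k.castSucc + L ≤ p k.succ := fun k => hsep k (Nat.succ_lt_succ k.2)
  have hsum := sum_range_sconv_mul_sconv_mul_sconv (x := x)
    (fun _ _ => add_le_of_lt_of_forall_succ hsep') hin hl₁₂ hl₂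
  rw [Finset.sum_add_distrib,
    sum_gap_eq_mul_sum_pairSep hsep' (fun j => acorr3 L x ((j : ℤ) - l₂) ((j : ℤ) + l₁ - l₂))
      (u := L + (l₂ - l₁)) fun j hj => acorr3_eq_zero_of_le x _ (by omega),
    sum_gap_eq_mul_sum_pairSep hsep' (fun j => acorr3 L x ((l₂ : ℤ) - l₁) ((j : ℤ) - l₁))
      (u := L + l₁) fun j hj => acorr3_eq_zero_of_le x _ (by omega)] at hsum
  rw [hsum]
  push_cast
  ring
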